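/- arXiv:2307.09478 — 7 statements merged into one kernel-verified Lean document; each statement's English description precedes it below -/
import Mathlib

section
/- If the pair (V,M) is a σ-smooth random variable on [0,1]², i.e., its distribution has density bounded by 1/σ with respect to Lebesgue measure, then the expected utility function b ↦ E[(V−b)·1{M ≤ b}] is (2/σ)-Lipschitz on [0,1]: for all x,y ∈ [0,1], |E[(V−y)1{M≤y}] − E[(V−x)1{M≤x}]| ≤ (2/σ)|y−x|. -/
/-!
For `x ≤ y`, pointwise `u(y) - u(x) = (V - y)·1{x < M ≤ y} - (y - x)·1{M ≤ x}`, so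
`|u(y) - u(x)| ≤ 1{x < M ≤ y} + (y - x)`. In expectation, smoothness of the marginal of `M`
bounds the first term by `(y - x)/σ`, and the second is at most `(y - x)/σ` because smoothness
also forces `σ ≤ 1`.
-/

open MeasureTheory Set

/-- The utility `u(b)` of the bid `b` at the realization `(V, M) = (v, m)`. -/
noncomputable def bidUtility (v m b : ℝ) : ℝ := (v - b) * if m ≤ b then 1 else 0

theorem abs_bidUtility_le (v m b : ℝ) : |bidUtility v m b| ≤ |v - b| := by
  unfold bidUtility
  split_ifs <;> simp

theorem abs_bidUtility_sub_le {v m x y : ℝ} (hxy : x ≤ y) (hvy : |v - y| ≤ 1) :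
    |bidUtility v m y - bidUtility v m x| ≤ (Ioc x y).indicator 1 m + (y - x) := by
  unfold bidUtility
  rcases le_or_gt m x with hmx | hxm
  · have hm : m ∉ Ioc x y := fun h => h.1.not_ge hmx
    rw [if_pos (hmx.trans hxy), if_pos hmx, indicator_of_notMem hm, abs_of_nonpos (by linarith)]
    linarith
  rcases le_or_gt m y with hmy | hym
  · rw [if_pos hmy, if_neg hxm.not_ge, indicator_of_mem (show m ∈ Ioc x y from ⟨hxm, hmy⟩)]
    simp only [Pi.one_apply, mul_one, mul_zero, sub_zero]
    linarith
  · have hm : m ∉ Ioc x y := fun h => h.2.not_gt hym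
    rw [if_neg hym.not_ge, if_neg hxm.not_ge, indicator_of_notMem hm]
    simp only [mul_zero, sub_zero, abs_zero, zero_add]
    linarith

section

variable {Ω : Type*} [MeasurableSpace Ω] {P : Measure Ω} {V M : Ω → ℝ}

theorem measurable_bidUtility (hV : Measurable V) (hM : Measurable M) (b : ℝ) :
    Measurable fun ω => bidUtility (V ω) (M ω) b :=
  (hV.sub_const b).mul (Measurable.ite (measurableSet_le hM measurable_const) measurable_const
    measurable_const)

theorem integrable_bidUtility [IsFiniteMeasure P] (hV : Measurable V) (hM : Measurable M)
    (hVr : ∀ ω, V ω ∈ Icc (0 : ℝ) 1) {b : ℝ} (hb : b ∈ Icc (0 : ℝ) 1) :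
    Integrable (fun ω => bidUtility (V ω) (M ω) b) P :=
  .of_bound (measurable_bidUtility hV hM b).aestronglyMeasurable 1 <| ae_of_all _ fun ω =>
    (abs_bidUtility_le _ _ _).trans (Real.dist_le_of_mem_Icc_01 (hVr ω) hb)

theorem measure_preimage_le_of_joint_le (hVr : ∀ ω, V ω ∈ Icc (0 : ℝ) 1) {c : ENNReal}
    (hjoint : ∀ A : Set (ℝ × ℝ), MeasurableSet A → P {ω | (V ω, M ω) ∈ A} ≤ volume A / c)
    {I : Set ℝ} (hI : MeasurableSet I) : P (M ⁻¹' I) ≤ volume I / c := by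
  have hA : {ω | (V ω, M ω) ∈ Icc 0 1 ×ˢ I} = M ⁻¹' I := by
    ext ω
    exact and_iff_right (hVr ω)
  have hvol : volume (Icc (0 : ℝ) 1 ×ˢ I) = volume I := by
    rw [Measure.volume_eq_prod, Measure.prod_prod, Real.volume_Icc]
    norm_num
  simpa only [hA, hvol] using hjoint (Icc 0 1 ×ˢ I) (measurableSet_Icc.prod hI)

variable {σ : ℝ}
  (hsmooth : ∀ I : Set ℝ, MeasurableSet I → P (M ⁻¹' I) ≤ volume I / ENNReal.ofReal σ)
include hsmooth

theorem le_one_of_measure_preimage_le [IsProbabilityMeasure P]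
    (hMr : ∀ ω, M ω ∈ Icc (0 : ℝ) 1) : σ ≤ 1 := by
  have h := hsmooth (Icc 0 1) measurableSet_Icc
  rw [preimage_eq_univ_iff.mpr (fun _ ⟨ω, hω⟩ => hω ▸ hMr ω), measure_univ, Real.volume_Icc,
    sub_zero, ENNReal.ofReal_one, ENNReal.le_div_iff_mul_le (by simp) (by simp), one_mul] at h
  exact ENNReal.ofReal_le_one.mp h

theorem measureReal_preimage_Ioc_le (hσ : 0 < σ) {x y : ℝ} (hxy : x ≤ y) :
    P.real (M ⁻¹' Ioc x y) ≤ (y - x) / σ := by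
  have h := hsmooth (Ioc x y) measurableSet_Ioc
  rw [Real.volume_Ioc, ← ENNReal.ofReal_div_of_pos hσ] at h
  exact ENNReal.toReal_le_of_le_ofReal (div_nonneg (sub_nonneg.mpr hxy) hσ.le) h

theorem abs_integral_bidUtility_sub_le [IsProbabilityMeasure P] (hV : Measurable V)
    (hM : Measurable M) (hVr : ∀ ω, V ω ∈ Icc (0 : ℝ) 1) (hMr : ∀ ω, M ω ∈ Icc (0 : ℝ) 1)
    (hσ : 0 < σ) {x y : ℝ} (hx : x ∈ Icc (0 : ℝ) 1) (hy : y ∈ Icc (0 : ℝ) 1) (hxy : x ≤ y) :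
    |∫ ω, bidUtility (V ω) (M ω) y ∂P - ∫ ω, bidUtility (V ω) (M ω) x ∂P|
      ≤ 2 / σ * (y - x) := by
  have hIoc : MeasurableSet (M ⁻¹' Ioc x y) := hM measurableSet_Ioc
  have hbound : Integrable (fun ω => (M ⁻¹' Ioc x y).indicator 1 ω + (y - x)) P :=
    ((integrable_const 1).indicator hIoc).add (integrable_const _)
  have hσ1 := le_one_of_measure_preimage_le hsmooth hMr
  calc |∫ ω, bidUtility (V ω) (M ω) y ∂P - ∫ ω, bidUtility (V ω) (M ω) x ∂P|
      = |∫ ω, (bidUtility (V ω) (M ω) y - bidUtility (V ω) (M ω) x) ∂P| := by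
        rw [integral_sub (integrable_bidUtility hV hM hVr hy) (integrable_bidUtility hV hM hVr hx)]
    _ ≤ ∫ ω, |bidUtility (V ω) (M ω) y - bidUtility (V ω) (M ω) x| ∂P :=
        abs_integral_le_integral_abs
    _ ≤ ∫ ω, ((M ⁻¹' Ioc x y).indicator 1 ω + (y - x)) ∂P :=
        integral_mono_of_nonneg (ae_of_all _ fun _ => abs_nonneg _) hbound <| ae_of_all _ fun ω =>
          abs_bidUtility_sub_le hxy (Real.dist_le_of_mem_Icc_01 (hVr ω) hy)
    _ = P.real (M ⁻¹' Ioc x y) + (y - x) := by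
        rw [integral_add ((integrable_const 1).indicator hIoc) (integrable_const _),
          integral_indicator_one hIoc, integral_const, probReal_univ, one_smul]
    _ ≤ (y - x) / σ + (y - x) / σ := by
        gcongr
        · exact measureReal_preimage_Ioc_le hsmooth hσ hxy
        · exact le_div_self (sub_nonneg.mpr hxy) hσ hσ1
    _ = 2 / σ * (y - x) := by ring

end

/-- Lipschitzness of the expected utility under a σ-smooth distribution
(Lemma "Lipschitzness"). -/
theorem stmt_0 {Ω : Type*} [MeasurableSpace Ω] {P : MeasureTheory.Measure Ω} [IsProbabilityMeasure P]
    (V M : Ω → ℝ) (hV : Measurable V) (hM : Measurable M)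
    (hVr : ∀ ω, V ω ∈ Set.Icc (0:ℝ) 1) (hMr : ∀ ω, M ω ∈ Set.Icc (0:ℝ) 1)
    (σ : ℝ) (hσ : 0 < σ)
    (hsmooth : ∀ A : Set (ℝ × ℝ), MeasurableSet A →
      P {ω | (V ω, M ω) ∈ A} ≤ volume A / ENNReal.ofReal σ) :
    ∀ x ∈ Set.Icc (0:ℝ) 1, ∀ y ∈ Set.Icc (0:ℝ) 1,
      |(∫ ω, (V ω - y) * (if M ω ≤ y then 1 else 0) ∂P)
        - (∫ ω, (V ω - x) * (if M ω ≤ x then 1 else 0) ∂P)| ≤ (2 / σ) * |y - x| := by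
  have hmarginal : ∀ I : Set ℝ, MeasurableSet I → P (M ⁻¹' I) ≤ volume I / ENNReal.ofReal σ :=
    fun _ hI => measure_preimage_le_of_joint_le hVr hsmooth hI
  intro x hx y hy
  rcases le_total x y with hxy | hyx
  · rw [abs_of_nonneg (sub_nonneg.mpr hxy)]
    exact abs_integral_bidUtility_sub_le hmarginal hV hM hVr hMr hσ hx hy hxy
  · rw [abs_sub_comm, abs_sub_comm y, abs_of_nonneg (sub_nonneg.mpr hyx)]
    exact abs_integral_bidUtility_sub_le hmarginal hV hM hVr hMr hσ hy hx hyx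
end

section
/- Let X = {x_0, x_1, …, x_K} with 0 = x_0 < x_1 < ⋯ < x_K ≤ 1, set x_{K+1} = 2, and for b ∈ [0,1] let k(b) be the unique index k with b ∈ [x_k, x_{k+1}). If M, M_{T_0+1}, …, M_{T_1} are i.i.d. random variables in [0,1] and V_t ∈ [0,1] are arbitrary random variables, then for every b ∈ [0,1], E[Σ_{t=T_0+1}^{T_1} (V_t − b)1{M_t ≤ b}] ≤ E[Σ_{t=T_0+1}^{T_1} (V_t − x_{k(b)})1{M_t ≤ x_{k(b)}}] + (T_1 − T_0)·P[x_{k(b)} < M < x_{k(b)+1}]. -/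
open MeasureTheory

/-- Discretization control without smoothness (Lemma `l:discret`). -/
theorem stmt_2 {Ω : Type*} [MeasurableSpace Ω] {P : MeasureTheory.Measure Ω}
    [IsProbabilityMeasure P]
    (K : ℕ) (x : ℕ → ℝ)
    (hx0 : x 0 = 0) (hmono : ∀ i < K, x i < x (i+1)) (hxK : x K ≤ 1)
    (hxtop : x (K+1) = 2)
    (T0 T1 : ℕ) (hT : T0 < T1)
    (V M : ℕ → Ω → ℝ) (Mdist : Ω → ℝ)
    (hV : ∀ t, Measurable (V t)) (hM : ∀ t, Measurable (M t)) (hMd : Measurable Mdist)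
    (hVr : ∀ t ω, V t ω ∈ Set.Icc (0:ℝ) 1) (hMr : ∀ t ω, M t ω ∈ Set.Icc (0:ℝ) 1)
    (hiid : ∀ t ∈ Finset.Icc (T0+1) T1, ∀ s : Set ℝ, MeasurableSet s →
      P {ω | M t ω ∈ s} = P {ω | Mdist ω ∈ s})
    (b : ℝ) (hb : b ∈ Set.Icc (0:ℝ) 1)
    (k : ℕ) (hk : k ≤ K) (hkb : x k ≤ b ∧ b < x (k+1)) :
    (∫ ω, (∑ t ∈ Finset.Icc (T0+1) T1, (V t ω - b) * (if M t ω ≤ b then 1 else 0)) ∂P)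
      ≤ (∫ ω, (∑ t ∈ Finset.Icc (T0+1) T1,
            (V t ω - x k) * (if M t ω ≤ x k then 1 else 0)) ∂P)
        + ((T1 : ℝ) - (T0 : ℝ)) * (P {ω | x k < Mdist ω ∧ Mdist ω < x (k+1)}).toReal := by
  classical
  set F := Finset.Icc (T0+1) T1 with hF
  set f : ℕ → Ω → ℝ := fun t ω => (V t ω - b) * (if M t ω ≤ b then 1 else 0) with hf
  set g : ℕ → Ω → ℝ := fun t ω => (V t ω - x k) * (if M t ω ≤ x k then 1 else 0) with hg
  set ind : ℕ → Ω → ℝ := fun t ω =>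
    if x k < M t ω ∧ M t ω < x (k+1) then 1 else 0 with hind
  -- measurability / integrability
  have hmf : ∀ t, Measurable (f t) := fun t =>
    ((hV t).sub measurable_const).mul
      (Measurable.ite (measurableSet_le (hM t) measurable_const)
        measurable_const measurable_const)
  have hmg : ∀ t, Measurable (g t) := fun t =>
    ((hV t).sub measurable_const).mul
      (Measurable.ite (measurableSet_le (hM t) measurable_const)
        measurable_const measurable_const)
  have hsetm : ∀ t, MeasurableSet {ω | x k < M t ω ∧ M t ω < x (k+1)} := by
    intro t
    exact (measurableSet_lt measurable_const (hM t)).inter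
      (measurableSet_lt (hM t) measurable_const)
  have hmind : ∀ t, Measurable (ind t) := fun t =>
    Measurable.ite (hsetm t) measurable_const measurable_const
  have hbound : ∀ (h : Ω → ℝ), Measurable h → (∀ ω, |h ω| ≤ 2) → Integrable h P := by
    intro h hm hb2
    exact (integrable_const (2:ℝ)).mono' hm.aestronglyMeasurable
      (Filter.Eventually.of_forall hb2)
  have hintf : ∀ t, Integrable (f t) P := by
    intro t
    refine hbound _ (hmf t) fun ω => ?_
    have hV1 := hVr t ω
    simp only [hf, abs_mul]
    have : |V t ω - b| ≤ 2 := by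
      rw [abs_le]; constructor <;> nlinarith [hV1.1, hV1.2, hb.1, hb.2]
    have h2 : |(if M t ω ≤ b then (1:ℝ) else 0)| ≤ 1 := by
      split <;> simp
    nlinarith [abs_nonneg (V t ω - b)]
  have hxk0 : (0:ℝ) ≤ x k := by
    have : ∀ i, (0:ℝ) ≤ x i ∨ K < i := by
      intro i
      by_cases hi : i ≤ K
      · left
        induction i with
        | zero => simp [hx0]
        | succ n ih =>
          have hn : n < K := hi
          have := hmono n hn
          have := ih (Nat.le_of_lt hn)
          linarith
      · right; omega
    rcases this k with h | h
    · exact h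
    · omega
  have hxk1 : x k ≤ 1 := le_trans hkb.1 hb.2
  have hintg : ∀ t, Integrable (g t) P := by
    intro t
    refine hbound _ (hmg t) fun ω => ?_
    have hV1 := hVr t ω
    simp only [hg, abs_mul]
    have : |V t ω - x k| ≤ 2 := by
      rw [abs_le]; constructor <;> nlinarith [hV1.1, hV1.2, hxk0, hxk1]
    have h2 : |(if M t ω ≤ x k then (1:ℝ) else 0)| ≤ 1 := by
      split <;> simp
    nlinarith [abs_nonneg (V t ω - x k)]
  have hintind : ∀ t, Integrable (ind t) P := by
    intro t
    refine hbound _ (hmind t) fun ω => ?_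
    simp only [hind]; split <;> simp
  -- pointwise inequality
  have hpt : ∀ t ω, f t ω ≤ g t ω + ind t ω := by
    intro t ω
    have hV1 := hVr t ω
    simp only [hf, hg, hind]
    by_cases h1 : M t ω ≤ x k
    · have h2 : M t ω ≤ b := le_trans h1 hkb.1
      have h3 : ¬ (x k < M t ω ∧ M t ω < x (k+1)) := by
        intro h; linarith [h.1]
      simp only [if_pos h1, if_pos h2, if_neg h3]
      nlinarith [hkb.1]
    · by_cases h2 : M t ω ≤ b
      · have h3 : x k < M t ω ∧ M t ω < x (k+1) := ⟨lt_of_not_ge h1, lt_of_le_of_lt h2 hkb.2⟩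
        simp only [if_neg h1, if_pos h2, if_pos h3]
        nlinarith [hb.1, hV1.1, hV1.2]
      · simp only [if_neg h1, if_neg h2]
        split <;> norm_num
  -- integral of indicator
  have hindint : ∀ t ∈ F, ∫ ω, ind t ω ∂P
      = (P {ω | x k < Mdist ω ∧ Mdist ω < x (k+1)}).toReal := by
    intro t ht
    have : ∫ ω, ind t ω ∂P = (P {ω | x k < M t ω ∧ M t ω < x (k+1)}).toReal := by
      rw [integral_eq_lintegral_of_nonneg_ae (Filter.Eventually.of_forall ?_)
          (hmind t).aestronglyMeasurable]
      · have : ∀ ω, ENNReal.ofReal (ind t ω)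
            = {ω | x k < M t ω ∧ M t ω < x (k+1)}.indicator (1 : Ω → ENNReal) ω := by
          intro ω
          simp only [hind, Set.indicator]
          split <;> simp [*] <;> tauto
        simp_rw [this]
        rw [lintegral_indicator_one (hsetm t)]
      · intro ω; simp only [hind]; split <;> norm_num
    rw [this]
    congr 1
    have := hiid t ht (Set.Ioo (x k) (x (k+1))) measurableSet_Ioo
    simpa [Set.Ioo, Set.mem_setOf_eq] using this
  -- combine
  have h1 : (∫ ω, ∑ t ∈ F, f t ω ∂P) ≤ ∫ ω, (∑ t ∈ F, g t ω) + (∑ t ∈ F, ind t ω) ∂P := by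
    apply integral_mono (integrable_finset_sum F fun t _ => hintf t)
      (((integrable_finset_sum F fun t _ => hintg t)).add
        (integrable_finset_sum F fun t _ => hintind t))
    intro ω
    calc ∑ t ∈ F, f t ω ≤ ∑ t ∈ F, (g t ω + ind t ω) :=
          Finset.sum_le_sum fun t _ => hpt t ω
      _ = (∑ t ∈ F, g t ω) + (∑ t ∈ F, ind t ω) := Finset.sum_add_distrib
  have h2 : ∫ ω, (∑ t ∈ F, g t ω) + (∑ t ∈ F, ind t ω) ∂P
      = (∫ ω, ∑ t ∈ F, g t ω ∂P) + ∫ ω, ∑ t ∈ F, ind t ω ∂P :=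
    integral_add (integrable_finset_sum F fun t _ => hintg t)
      (integrable_finset_sum F fun t _ => hintind t)
  have h3 : (∫ ω, ∑ t ∈ F, ind t ω ∂P)
      = ((T1 : ℝ) - (T0 : ℝ)) * (P {ω | x k < Mdist ω ∧ Mdist ω < x (k+1)}).toReal := by
    rw [integral_finset_sum F fun t _ => hintind t]
    rw [Finset.sum_congr rfl hindint, Finset.sum_const]
    have hcard : F.card = T1 - T0 := by
      rw [hF, Nat.card_Icc]; omega
    rw [hcard, nsmul_eq_mul, Nat.cast_sub hT.le]
  calc (∫ ω, ∑ t ∈ F, f t ω ∂P) ≤ _ := h1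
    _ = _ := h2
    _ = _ := by rw [h3]
end

section
/- For ε ∈ (0,1/2) define g⁺(b) on [0,1] by: g⁺(b) = (1+ε)(b/4)(1−8b) for b ∈ [0,1/4); g⁺(b) = −(1/8)(16b²−14b+3) + (ε/4)(8b²−11b+2) for b ∈ [1/4,1/2); g⁺(b) = (1/2)(1−2b−(3/4)ε) for b ∈ [1/2,1]. Then sup_{b∈[0,1]} g⁺(b) ≥ g⁺(1/16) = (1+ε)/128 and for all b ∈ [1/4,1], g⁺(b) ≤ 1/128; hence for all b ∈ [1/4,1], sup_{x∈[0,1]} g⁺(x) ≥ g⁺(b) + ε/128. -/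
/-- Suboptimality gap for the positively perturbed distribution (part of Claim
`cl:suboptimality_gap`). -/
theorem stmt_7 (ε : ℝ) (hε0 : 0 < ε) (hε1 : ε < 1/2) (gp : ℝ → ℝ)
    (hgp : ∀ b ∈ Set.Icc (0:ℝ) 1, gp b =
      if b < 1/4 then (1 + ε) * ((b/4) * (1 - 8*b))
      else if b < 1/2 then -(1/8) * (16*b^2 - 14*b + 3) + (ε/4) * (8*b^2 - 11*b + 2)
      else (1/2) * (1 - 2*b - (3/4)*ε)) :
    gp (1/16) = (1 + ε)/128 ∧
    sSup (gp '' Set.Icc (0:ℝ) 1) ≥ gp (1/16) ∧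
    (∀ b ∈ Set.Icc (1/4:ℝ) 1, gp b ≤ 1/128) ∧
    (∀ b ∈ Set.Icc (1/4:ℝ) 1, sSup (gp '' Set.Icc (0:ℝ) 1) ≥ gp b + ε/128) := by
  have hmem : (1/16 : ℝ) ∈ Set.Icc (0:ℝ) 1 := by constructor <;> norm_num
  have h16 : gp (1/16) = (1 + ε)/128 := by
    rw [hgp _ hmem]
    norm_num
    ring
  have hbdd : BddAbove (gp '' Set.Icc (0:ℝ) 1) := by
    refine ⟨1, ?_⟩
    rintro y ⟨b, hb, rfl⟩
    rw [hgp _ hb]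
    obtain ⟨hb0, hb1⟩ := hb
    split_ifs with h1 h2
    · nlinarith [sq_nonneg b, sq_nonneg (1 - 8*b)]
    · push_neg at h1
      nlinarith [sq_nonneg (b - 1/4), sq_nonneg b]
    · push_neg at h1 h2
      nlinarith
  have hsup : sSup (gp '' Set.Icc (0:ℝ) 1) ≥ gp (1/16) :=
    le_csSup hbdd ⟨1/16, hmem, rfl⟩
  have hle : ∀ b ∈ Set.Icc (1/4:ℝ) 1, gp b ≤ 1/128 := by
    rintro b ⟨hb0, hb1⟩
    have hb0' : (0:ℝ) ≤ b := by linarith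
    rw [hgp _ ⟨hb0', hb1⟩]
    have h1 : ¬ b < 1/4 := by linarith
    rw [if_neg h1]
    split_ifs with h2
    · nlinarith [sq_nonneg (4*b - 7/4), mul_nonneg (sub_nonneg.2 hb0) (le_of_lt (sub_pos.2 h2)),
        mul_nonneg (le_of_lt hε0) (mul_nonneg (sub_nonneg.2 hb0) (le_of_lt (sub_pos.2 h2)))]
    · push_neg at h2
      nlinarith
  refine ⟨h16, hsup, hle, ?_⟩
  intro b hb
  have := hle b hb
  have : gp b + ε/128 ≤ (1 + ε)/128 := by linarith
  linarith [h16 ▸ hsup]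
end

section
/- Let (V,M) have the density f(v,m) = 1_{[7/8,1]}(v)·( (1/(v−m)²)·1_{[1/4, v−1/8]}(m) + (4/(v−1/4))·1_{[0,1/4)}(m) ) on [0,1]². Then for every b ∈ [0,1], E[(V−b)·1{M ≤ b}] equals: b·(1/2 + (1−4b)ln(6/5)) if b ∈ [0,1/4); 1/8 if b ∈ [1/4,3/4); −(4b² − 6b + 17/8) if b ∈ [3/4,7/8); and 15/16 − b if b ∈ [7/8,1]. -/
/-!
Push the expectation forward to the plane and integrate by Fubini, in `m` first. For
`v ∈ [7/8, 1]` the mass `∫_{m ≤ b} f(v, m) dm` is `4b/(v - 1/4)` if `b < 1/4`, and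
`1/max(v - b, 1/8)` if `b ≥ 1/4`: the uniform part of the density on `[0, 1/4)` exactly cancels
the lower boundary term `1/(v - 1/4)` of `∫ dm/(v - m)²`. The payoff `(v - b)` times this mass is
then `4b(v - b)/(v - 1/4)`, which integrates to a logarithm, resp. `min(1, 8(v - b))`, which is
`1` on all of `[7/8, 1]` as long as `b ≤ 3/4`.
-/

open MeasureTheory Set Real

theorem integral_comp_eq_integral_mul_of_map_eq_withDensity {Ω α : Type*} [MeasurableSpace Ω]
    [MeasurableSpace α] {P : Measure Ω} {μ : Measure α} {X : Ω → α} {f g : α → ℝ}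
    (hX : AEMeasurable X P) (hf : Measurable f) (hf₀ : ∀ x, 0 ≤ f x)
    (hg : AEStronglyMeasurable g (P.map X))
    (hdens : P.map X = μ.withDensity fun x => ENNReal.ofReal (f x)) :
    ∫ ω, g (X ω) ∂P = ∫ x, f x * g x ∂μ := by
  rw [← integral_map hX hg, hdens, integral_withDensity_eq_integral_toReal_smul hf.ennreal_ofReal
    (ae_of_all _ fun _ => ENNReal.ofReal_lt_top)]
  simp only [ENNReal.toReal_ofReal (hf₀ _), smul_eq_mul]

lemma integral_one_div_sub_sq {a t v : ℝ} (ha : a < v) (ht : t < v) :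
    ∫ m in a..t, 1/(v - m)^2 = 1/(v - t) - 1/(v - a) := by
  have hpos : ∀ x ∈ uIcc a t, 0 < v - x := fun x hx => by
    linarith [hx.2, max_lt ha ht]
  refine intervalIntegral.integral_eq_sub_of_hasDerivAt (f := fun m => 1/(v - m)) (fun x hx => ?_)
    (ContinuousOn.intervalIntegrable ?_)
  · exact ((hasDerivAt_const x 1).div ((hasDerivAt_id' x).const_sub v) (hpos x hx).ne').congr_deriv
      (by ring)
  · exact continuousOn_const.div (by fun_prop) fun x hx => (pow_pos (hpos x hx) 2).ne'

lemma integral_sub_div_sub {a c b d : ℝ} (ha : d < a) (hc : d < c) :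
    ∫ v in a..c, (v - b)/(v - d) = c - a + (d - b) * log ((c - d)/(a - d)) := by
  have hpos : ∀ v ∈ uIcc a c, 0 < v - d := fun v hv => by
    linarith [hv.1, lt_min ha hc]
  have hsplit : EqOn (fun v => (v - b)/(v - d)) (fun v => 1 + (d - b) * (v - d)⁻¹) (uIcc a c) :=
    fun v hv => by field_simp [(hpos v hv).ne']; ring
  rw [intervalIntegral.integral_congr hsplit, intervalIntegral.integral_add,
    intervalIntegral.integral_const_mul, intervalIntegral.integral_comp_sub_right (fun x => x⁻¹),
    integral_inv_of_pos (by linarith) (by linarith)]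
  · simp
  · exact intervalIntegrable_const
  · exact (continuousOn_const.mul (continuousOn_id.sub continuousOn_const |>.inv₀
      fun v hv => (hpos v hv).ne')).intervalIntegrable (μ := volume)

lemma integral_sub_div_max_of_le {a c b ε : ℝ} (hε : 0 < ε) (hac : a ≤ c) (ha : b + ε ≤ a) :
    ∫ v in a..c, (v - b)/max (v - b) ε = c - a := by
  rw [intervalIntegral.integral_congr (g := fun _ => 1), intervalIntegral.integral_const,
    smul_eq_mul, mul_one]
  intro v hv
  rw [uIcc_of_le hac] at hv
  have hεv : ε ≤ v - b := by linarith [hv.1]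
  simp only [max_eq_left hεv]
  exact div_self (by linarith)

lemma integral_sub_div_max_of_ge {a c b ε : ℝ} (hac : a ≤ c) (hc : c ≤ b + ε) :
    ∫ v in a..c, (v - b)/max (v - b) ε = ((c - b)^2 - (a - b)^2)/(2 * ε) := by
  rw [intervalIntegral.integral_congr (g := fun v => (v - b)/ε)]
  · simp only [intervalIntegral.integral_div, intervalIntegral.intervalIntegrable_id,
      intervalIntegrable_const, intervalIntegral.integral_sub, integral_id,
      intervalIntegral.integral_const, smul_eq_mul]
    ring
  intro v hv
  rw [uIcc_of_le hac] at hv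
  have hvε : v - b ≤ ε := by linarith [hv.2]
  simp only [max_eq_right hvε]

lemma integral_sub_div_max (b : ℝ) :
    ∫ v in (7/8:ℝ)..1, (v - b)/max (v - b) (1/8)
      = if b < 3/4 then 1/8 else if b < 7/8 then -(4*b^2 - 6*b + 17/8) else 15/16 - b := by
  have hε : (0:ℝ) < 1/8 := by norm_num
  split_ifs with h₁ h₂
  · rw [integral_sub_div_max_of_le hε (by norm_num) (by linarith)]; norm_num
  · have hcont : Continuous fun v => (v - b)/max (v - b) (1/8) :=
      (continuous_id.sub continuous_const).div (by fun_prop) fun v => (lt_max_of_lt_right hε).ne'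
    rw [← intervalIntegral.integral_add_adjacent_intervals (b := b + 1/8)
      (hcont.intervalIntegrable _ _) (hcont.intervalIntegrable _ _),
      integral_sub_div_max_of_ge (by linarith) le_rfl,
      integral_sub_div_max_of_le hε (by linarith) le_rfl]
    ring
  · rw [integral_sub_div_max_of_ge (by norm_num) (by linarith)]; ring

noncomputable def bidDensity : ℝ × ℝ → ℝ := fun p =>
  if p.1 ∈ Icc (7/8:ℝ) 1 then
    (if p.2 ∈ Icc (1/4:ℝ) (p.1 - 1/8) then 1/(p.1 - p.2)^2 else 0)
      + (if p.2 ∈ Ico (0:ℝ) (1/4) then 4/(p.1 - 1/4) else 0)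
  else 0

lemma measurable_bidDensity : Measurable bidDensity := by
  unfold bidDensity
  refine Measurable.ite (measurableSet_Icc.preimage measurable_fst) (Measurable.add ?_ ?_)
    measurable_const <;> refine Measurable.ite ?_ (by fun_prop) measurable_const
  · exact (measurableSet_le measurable_const measurable_snd).inter
      (measurableSet_le measurable_snd (by fun_prop))
  · exact measurableSet_Ico.preimage measurable_snd

lemma bidDensity_of_mem {v : ℝ} (hv : v ∈ Icc (7/8:ℝ) 1) (m : ℝ) :
    bidDensity (v, m) = (Icc (1/4) (v - 1/8)).indicator (fun m => 1/(v - m)^2) m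
      + (Ico 0 (1/4)).indicator (fun _ => 4/(v - 1/4)) m := by
  simp only [bidDensity, if_pos hv, indicator_apply]

lemma bidDensity_of_notMem {v : ℝ} (hv : v ∉ Icc (7/8:ℝ) 1) (m : ℝ) : bidDensity (v, m) = 0 := by
  simp only [bidDensity, if_neg hv]

lemma bidDensity_nonneg (p : ℝ × ℝ) : 0 ≤ bidDensity p := by
  obtain ⟨v, m⟩ := p
  by_cases hv : v ∈ Icc (7/8:ℝ) 1
  · rw [bidDensity_of_mem hv]
    have : 0 < v - 1/4 := by linarith [hv.1]
    apply add_nonneg <;> apply indicator_nonneg <;> intros <;> positivity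
  · rw [bidDensity_of_notMem hv]

lemma bidDensity_le (p : ℝ × ℝ) : bidDensity p ≤ 72 := by
  obtain ⟨v, m⟩ := p
  by_cases hv : v ∈ Icc (7/8:ℝ) 1
  · have hv₁ := hv.1
    have h₁ : ∀ m ∈ Icc (1/4:ℝ) (v - 1/8), 1/(v - m)^2 ≤ 64 := fun m hm => by
      rw [div_le_iff₀ (by nlinarith [hm.2])]; nlinarith [hm.2]
    have h₂ : 4/(v - 1/4) ≤ 8 := by rw [div_le_iff₀ (by linarith)]; linarith
    rw [bidDensity_of_mem hv, indicator_apply, indicator_apply]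
    split_ifs with hm₁ hm₂ hm₂
    · linarith [h₁ m hm₁]
    · linarith [h₁ m hm₁]
    · linarith
    · norm_num
  · rw [bidDensity_of_notMem hv]; norm_num

lemma support_bidDensity_subset : Function.support bidDensity ⊆ Icc (7/8:ℝ) 1 ×ˢ Icc 0 1 := by
  rintro ⟨v, m⟩ hp
  by_cases hv : v ∈ Icc (7/8:ℝ) 1
  · refine ⟨hv, ?_⟩
    rw [Function.mem_support, bidDensity_of_mem hv] at hp
    by_contra hm
    have h₁ : Icc (1/4:ℝ) (v - 1/8) ⊆ Icc 0 1 := Icc_subset_Icc (by norm_num) (by linarith [hv.2])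
    have h₂ : Ico (0:ℝ) (1/4) ⊆ Icc 0 1 :=
      Ico_subset_Icc_self.trans (Icc_subset_Icc le_rfl (by norm_num))
    rw [indicator_of_notMem (fun h => hm (h₁ h)), indicator_of_notMem (fun h => hm (h₂ h)),
      add_zero] at hp
    exact hp rfl
  · exact absurd (bidDensity_of_notMem hv m) hp

lemma integrable_bidDensity : Integrable bidDensity := by
  rw [← integrableOn_iff_integrable_of_support_subset support_bidDensity_subset]
  refine Measure.integrableOn_of_bounded (M := 72)
    (isCompact_Icc.prod isCompact_Icc).measure_lt_top.ne
    measurable_bidDensity.aestronglyMeasurable (ae_of_all _ fun p => ?_)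
  rw [Real.norm_of_nonneg (bidDensity_nonneg p)]
  exact bidDensity_le p

lemma setIntegral_Iic_bidDensity {v : ℝ} (hv : v ∈ Icc (7/8:ℝ) 1) (b : ℝ) :
    ∫ m in Iic b, bidDensity (v, m) = (∫ m in Iic b ∩ Icc (1/4) (v - 1/8), 1/(v - m)^2)
      + 4/(v - 1/4) * volume.real (Iic b ∩ Ico 0 (1/4)) := by
  have hint : IntegrableOn (fun m => 1/(v - m)^2) (Icc (1/4) (v - 1/8)) :=
    (continuousOn_const.div (by fun_prop) fun m hm => by nlinarith [hm.2]).integrableOn_Icc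
  simp_rw [bidDensity_of_mem hv]
  rw [integral_add, setIntegral_indicator measurableSet_Icc,
    setIntegral_indicator measurableSet_Ico, setIntegral_const, smul_eq_mul, mul_comm]
  · exact ((integrable_indicator_iff measurableSet_Icc).mpr hint).integrableOn
  · exact ((integrable_indicator_iff measurableSet_Ico).mpr
      (integrableOn_const measure_Ico_lt_top.ne)).integrableOn

lemma setIntegral_Iic_bidDensity_of_lt {v b : ℝ} (hv : v ∈ Icc (7/8:ℝ) 1) (hb₀ : 0 ≤ b)
    (hb : b < 1/4) : ∫ m in Iic b, bidDensity (v, m) = 4 * b/(v - 1/4) := by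
  have h₁ : Iic b ∩ Icc (1/4) (v - 1/8) = ∅ :=
    eq_empty_of_forall_notMem fun m hm => by linarith [mem_Iic.mp hm.1, hm.2.1]
  have h₂ : Iic b ∩ Ico 0 (1/4) = Icc 0 b := by
    ext m
    simp only [mem_inter_iff, mem_Iic, mem_Ico, mem_Icc]
    constructor
    · rintro ⟨hmb, hm₀, -⟩; exact ⟨hm₀, hmb⟩
    · rintro ⟨hm₀, hmb⟩; exact ⟨hmb, hm₀, hmb.trans_lt hb⟩
  rw [setIntegral_Iic_bidDensity hv, h₁, h₂, setIntegral_empty, Real.volume_real_Icc_of_le hb₀]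
  ring

lemma setIntegral_Iic_bidDensity_of_le {v b : ℝ} (hv : v ∈ Icc (7/8:ℝ) 1) (hb : 1/4 ≤ b) :
    ∫ m in Iic b, bidDensity (v, m) = 1/max (v - b) (1/8) := by
  have h₁ : Iic b ∩ Icc (1/4) (v - 1/8) = Icc (1/4) (min b (v - 1/8)) := by
    ext m; simp only [mem_inter_iff, mem_Iic, mem_Icc, le_min_iff]; tauto
  have h₂ : Iic b ∩ Ico 0 (1/4) = Ico 0 (1/4) :=
    inter_eq_right.mpr fun m hm => mem_Iic.mpr (by linarith [hm.2])
  have h14 : (1/4:ℝ) ≤ min b (v - 1/8) := le_min hb (by linarith [hv.1])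
  rw [setIntegral_Iic_bidDensity hv, h₁, h₂, integral_Icc_eq_integral_Ioc,
    ← intervalIntegral.integral_of_le h14, integral_one_div_sub_sq (by linarith [hv.1])
      (by linarith [min_le_right b (v - 1/8)]), Real.volume_real_Ico_of_le (by norm_num),
    ← max_sub_sub_left, sub_sub_cancel]
  have : v - 1/4 ≠ 0 := by linarith [hv.1]
  field_simp
  ring

lemma measurable_payoff (b : ℝ) :
    Measurable fun p : ℝ × ℝ => (p.1 - b) * (if p.2 ≤ b then (1:ℝ) else 0) :=
  (measurable_fst.sub_const b).mul
    (Measurable.ite (measurableSet_le measurable_snd measurable_const) measurable_const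
      measurable_const)

lemma integral_bidDensity_mul_payoff {b : ℝ} (hb : b ∈ Icc (0:ℝ) 1) :
    ∫ p, bidDensity p * ((p.1 - b) * (if p.2 ≤ b then 1 else 0))
      = ∫ v in (7/8:ℝ)..1, (v - b) * ∫ m in Iic b, bidDensity (v, m) := by
  have hint : Integrable fun p => bidDensity p * ((p.1 - b) * (if p.2 ≤ b then 1 else 0)) := by
    refine integrable_bidDensity.mono'
      (measurable_bidDensity.mul (measurable_payoff b)).aestronglyMeasurable
      (ae_of_all _ fun ⟨v, m⟩ => ?_)
    by_cases hv : v ∈ Icc (7/8:ℝ) 1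
    · have hvb : |v - b| ≤ 1 := abs_le.mpr ⟨by linarith [hb.2, hv.1], by linarith [hb.1, hv.2]⟩
      rw [norm_mul, Real.norm_of_nonneg (bidDensity_nonneg _)]
      refine mul_le_of_le_one_right (bidDensity_nonneg _) ?_
      rw [norm_mul]
      split_ifs <;> simp [hvb]
    · simp [bidDensity_of_notMem hv]
  have hslice : ∀ v, ∫ m, bidDensity (v, m) * ((v - b) * (if m ≤ b then 1 else 0))
      = (v - b) * ∫ m in Iic b, bidDensity (v, m) := fun v => by
    rw [← integral_indicator measurableSet_Iic, ← integral_const_mul]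
    congr 1 with m
    simp only [indicator_apply, mem_Iic]
    split_ifs <;> ring
  rw [Measure.volume_eq_prod, integral_prod _ hint]
  simp only [hslice]
  rw [← setIntegral_eq_integral_of_forall_compl_eq_zero (s := Icc (7/8) 1),
    integral_Icc_eq_integral_Ioc, ← intervalIntegral.integral_of_le (by norm_num)]
  intro v hv
  simp [bidDensity_of_notMem hv]

lemma integral_bidDensity_mul_payoff_of_lt {b : ℝ} (hb₀ : 0 ≤ b) (hb : b < 1/4) :
    ∫ p, bidDensity p * ((p.1 - b) * (if p.2 ≤ b then 1 else 0))
      = b * (1/2 + (1 - 4*b) * log (6/5)) := by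
  rw [integral_bidDensity_mul_payoff ⟨hb₀, by linarith⟩,
    intervalIntegral.integral_congr (g := fun v => 4 * b * ((v - b)/(v - 1/4))),
    intervalIntegral.integral_const_mul, integral_sub_div_sub (by norm_num) (by norm_num)]
  · rw [show (1 - 1/4 : ℝ)/(7/8 - 1/4) = 6/5 by norm_num]
    ring
  intro v hv
  rw [uIcc_of_le (by norm_num)] at hv
  simp only [setIntegral_Iic_bidDensity_of_lt hv hb₀ hb]
  ring

lemma integral_bidDensity_mul_payoff_of_le {b : ℝ} (hb : 1/4 ≤ b) (hb₁ : b ≤ 1) :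
    ∫ p, bidDensity p * ((p.1 - b) * (if p.2 ≤ b then 1 else 0))
      = ∫ v in (7/8:ℝ)..1, (v - b)/max (v - b) (1/8) := by
  rw [integral_bidDensity_mul_payoff ⟨by linarith, hb₁⟩]
  refine intervalIntegral.integral_congr fun v hv => ?_
  rw [uIcc_of_le (by norm_num)] at hv
  simp only [setIntegral_Iic_bidDensity_of_le hv hb, mul_one_div]

theorem stmt_10_general {Ω : Type*} [MeasurableSpace Ω] {P : MeasureTheory.Measure Ω}
    (V M : Ω → ℝ) (hVM : Measurable (fun ω => (V ω, M ω)))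
    (f : ℝ × ℝ → ℝ)
    (hf : ∀ p : ℝ × ℝ, f p =
      if p.1 ∈ Set.Icc (7/8:ℝ) 1 then
        (if p.2 ∈ Set.Icc (1/4:ℝ) (p.1 - 1/8) then 1/(p.1 - p.2)^2 else 0)
          + (if p.2 ∈ Set.Ico (0:ℝ) (1/4) then 4/(p.1 - 1/4) else 0)
      else 0)
    (hdens : Measure.map (fun ω => (V ω, M ω)) P
      = volume.withDensity (fun p => ENNReal.ofReal (f p))) :
    ∀ b ∈ Set.Icc (0:ℝ) 1,
      (∫ ω, (V ω - b) * (if M ω ≤ b then 1 else 0) ∂P)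
        = if b < 1/4 then b * (1/2 + (1 - 4*b) * Real.log (6/5))
          else if b < 3/4 then 1/8
          else if b < 7/8 then -(4*b^2 - 6*b + 17/8)
          else 15/16 - b := by
  obtain rfl : f = bidDensity := funext hf
  intro b hb
  rw [integral_comp_eq_integral_mul_of_map_eq_withDensity hVM.aemeasurable measurable_bidDensity
    bidDensity_nonneg (measurable_payoff b).aestronglyMeasurable hdens]
  by_cases h : b < 1/4
  · rw [if_pos h, integral_bidDensity_mul_payoff_of_lt hb.1 h]
  · rw [if_neg h, integral_bidDensity_mul_payoff_of_le (not_lt.mp h) hb.2, integral_sub_div_max]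

/-- Expected utility under the base density f in the semi-transparent lower bound. -/
theorem stmt_10 {Ω : Type*} [MeasurableSpace Ω] {P : MeasureTheory.Measure Ω}
    [IsProbabilityMeasure P]
    (V M : Ω → ℝ) (hVM : Measurable (fun ω => (V ω, M ω)))
    (f : ℝ × ℝ → ℝ)
    (hf : ∀ p : ℝ × ℝ, f p =
      if p.1 ∈ Set.Icc (7/8:ℝ) 1 then
        (if p.2 ∈ Set.Icc (1/4:ℝ) (p.1 - 1/8) then 1/(p.1 - p.2)^2 else 0)
          + (if p.2 ∈ Set.Ico (0:ℝ) (1/4) then 4/(p.1 - 1/4) else 0)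
      else 0)
    (hdens : Measure.map (fun ω => (V ω, M ω)) P
      = volume.withDensity (fun p => ENNReal.ofReal (f p))) :
    ∀ b ∈ Set.Icc (0:ℝ) 1,
      (∫ ω, (V ω - b) * (if M ω ≤ b then 1 else 0) ∂P)
        = if b < 1/4 then b * (1/2 + (1 - 4*b) * Real.log (6/5))
          else if b < 3/4 then 1/8
          else if b < 7/8 then -(4*b^2 - 6*b + 17/8)
          else 15/16 - b :=
  stmt_10_general V M hVM f hf hdens
end

section
/- The function U(b) equal to b·(1/2 + (1−4b)ln(6/5)) on [0,1/4), to 1/8 on [1/4,3/4), to −(4b²−6b+17/8) on [3/4,7/8), and to 15/16−b on [7/8,1], satisfies: U(b) ≤ 1/8 for all b ∈ [0,1], with equality exactly on [1/4, 3/4]. -/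
/-- The base expected utility is at most 1/8, with equality exactly on [1/4, 3/4]. -/
theorem stmt_11 (U : ℝ → ℝ)
    (hU : ∀ b ∈ Set.Icc (0:ℝ) 1, U b =
      if b < 1/4 then b * (1/2 + (1 - 4*b) * Real.log (6/5))
      else if b < 3/4 then 1/8
      else if b < 7/8 then -(4*b^2 - 6*b + 17/8)
      else 15/16 - b) :
    ∀ b ∈ Set.Icc (0:ℝ) 1, U b ≤ 1/8 ∧ (U b = 1/8 ↔ 1/4 ≤ b ∧ b ≤ 3/4) := by
  have hL0 : 0 ≤ Real.log (6/5) := Real.log_nonneg (by norm_num)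
  have hL1 : Real.log (6/5) ≤ 1/5 := by
    have := Real.log_le_sub_one_of_pos (show (0:ℝ) < 6/5 by norm_num)
    linarith
  intro b hb
  obtain ⟨hb0, hb1⟩ := hb
  rw [hU b ⟨hb0, hb1⟩]
  set L := Real.log (6/5) with hL
  split_ifs with h1 h2 h3
  · have hbL : b * L ≤ 1/20 := by nlinarith
    have hlt : b * (1/2 + (1 - 4*b) * L) < 1/8 := by nlinarith
    exact ⟨le_of_lt hlt, by constructor <;> intro h <;> [linarith; linarith [h.1]]⟩
  · exact ⟨le_refl _, by constructor <;> intro h <;> [exact ⟨le_of_not_gt h1, le_of_lt h2⟩; rfl]⟩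
  · constructor
    · nlinarith
    constructor
    · intro h
      have hb34 : b = 3/4 := by nlinarith
      exact ⟨by linarith, le_of_eq hb34⟩
    · intro ⟨_, h34⟩
      have : b = 3/4 := le_antisymm h34 (le_of_not_gt h2)
      rw [this]; norm_num
  · refine ⟨by linarith, ?_⟩
    constructor
    · intro h; exfalso; push_neg at h3; linarith
    · intro ⟨_, h34⟩; exfalso; push_neg at h3; linarith
end

section
/- For all x ≤ 1, exp(x) ≤ 1 + x + (e−2)·x². -/
open Real Finset
open scoped Nat

/- On `[0, 1]` the tail `∑_{i ≥ n} x^i/i!` is bounded termwise by `x^n` times the tail at `x = 1`,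
which is `e - ∑_{i<n} 1/i!`; for `n = 2` this is the claim. For `x ≤ 0` the cruder bound
`1 + x + x²/2` already suffices, because `e - 2 ≥ 1/2`. -/

lemma Real.exp_sub_sum_range_eq_tsum (x : ℝ) (n : ℕ) :
    exp x - ∑ i ∈ range n, x ^ i / i ! = ∑' i, x ^ (i + n) / (i + n)! := by
  rw [exp_eq_exp_ℝ, NormedSpace.exp_eq_tsum_div]
  beta_reduce
  rw [← (summable_pow_div_factorial x).sum_add_tsum_nat_add n, add_sub_cancel_left]

lemma Real.exp_sub_sum_range_le_pow_mul {x : ℝ} (hx₀ : 0 ≤ x) (hx₁ : x ≤ 1) (n : ℕ) :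
    exp x - ∑ i ∈ range n, x ^ i / i ! ≤ x ^ n * (exp 1 - ∑ i ∈ range n, (i ! : ℝ)⁻¹) := by
  have hsummable (y : ℝ) : Summable fun i ↦ y ^ (i + n) / (i + n)! :=
    (summable_nat_add_iff n).2 (summable_pow_div_factorial y)
  have hone : ∑ i ∈ range n, (i ! : ℝ)⁻¹ = ∑ i ∈ range n, (1 : ℝ) ^ i / i ! := by simp
  rw [hone, exp_sub_sum_range_eq_tsum, exp_sub_sum_range_eq_tsum, ← tsum_mul_left]
  refine (hsummable x).tsum_le_tsum (fun i ↦ ?_) ((hsummable 1).mul_left _)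
  rw [one_pow, ← mul_div_assoc, mul_one, pow_add]
  gcongr
  exact mul_le_of_le_one_left (by positivity) (pow_le_one₀ hx₀ hx₁)

lemma Real.exp_le_quadratic_of_nonpos {x : ℝ} (hx : x ≤ 0) : exp x ≤ 1 + x + x ^ 2 / 2 := by
  have hneg : 1 - x + x ^ 2 / 2 ≤ exp (-x) := by
    simpa [sub_eq_add_neg] using quadratic_le_exp_of_nonneg (neg_nonneg.2 hx)
  have hpos : 0 < 1 - x + x ^ 2 / 2 := by nlinarith
  calc exp x = (exp (-x))⁻¹ := by rw [exp_neg, inv_inv]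
    _ ≤ (1 - x + x ^ 2 / 2)⁻¹ := inv_anti₀ hpos hneg
    -- `(1 + x + x²/2)(1 - x + x²/2) = 1 + x⁴/4 ≥ 1`
    _ ≤ 1 + x + x ^ 2 / 2 := by
      rw [inv_le_iff_one_le_mul₀' hpos]
      nlinarith [pow_nonneg (sq_nonneg x) 2]

theorem stmt_13 (x : ℝ) (hx : x ≤ 1) :
    Real.exp x ≤ 1 + x + (Real.exp 1 - 2) * x ^ 2 := by
  rcases le_total x 0 with hx₀ | hx₀
  · have he : 1 + 1 + 1 ^ 2 / 2 ≤ exp 1 := quadratic_le_exp_of_nonneg zero_le_one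
    nlinarith [exp_le_quadratic_of_nonpos hx₀, sq_nonneg x]
  · have htail := exp_sub_sum_range_le_pow_mul hx₀ hx 2
    norm_num [sum_range_succ] at htail
    linarith
end

section
/- Tent-map perturbation identity: for w, ε with 1/4 ≤ w−ε and w+ε ≤ 3/4, define the perturbation g_{w,ε}(v,m) = (16/9)·( 1_{R¹∪R⁴}(v,m) − 1_{R²∪R³}(v,m) ), where R¹ = [15/16,1]×[w−ε,w), R² = [15/16,1]×[w,w+ε), R³ = [7/8,15/16)×[w−ε,w), R⁴ = [7/8,15/16)×[w,w+ε). Then ∫_{[0,1]²} g_{w,ε} = 0, and for every b ∈ [0,1]: ∫_{[0,1]²} (v−b)·1{m ≤ b}·g_{w,ε}(v,m) dv dm = (ε/144)·Λ_{w,ε}(b), where Λ_{w,ε}(b) = max{1 − |b−w|/ε, 0} is the tent map centered at w with radius ε. -/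
/-!
The perturbation factorizes as `g (v, m) = 16/9 * φ v * ψ m` (`φ = valueProfile`,
`ψ = bidProfile w ε`), so by Fubini both integrals split into one-dimensional ones.
Since `∫ φ = 0` and the two strips of `φ` have equal width, `∫ (v - b) φ v dv = ∫ v φ v dv = 1/256`
for every `b`, while `∫_{m ≤ b} ψ` is the length of `[w - ε, w)` below `b` minus that of
`[w, w + ε)`, which is `ε Λ_{w,ε}(b)`; and `16/9 · 1/256 = 1/144`.
-/

open MeasureTheory Set

theorem ite_or_sub_ite_or_eq_mul {R : Type*} [Ring R] (a b c d : Prop)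
    [Decidable a] [Decidable b] [Decidable c] [Decidable d] :
    ((if a ∧ c ∨ b ∧ d then 1 else 0) - (if a ∧ d ∨ b ∧ c then 1 else 0) : R)
      = ((if a then 1 else 0) - (if b then 1 else 0)) *
        ((if c then 1 else 0) - (if d then 1 else 0)) := by
  by_cases a <;> by_cases b <;> by_cases c <;> by_cases d <;> simp [*]

theorem setIntegral_mul_indicator_sub_indicator {α : Type*} [MeasurableSpace α] {μ : Measure α}
    {S s t : Set α} {f : α → ℝ} (hs : MeasurableSet s) (ht : MeasurableSet t)
    (hsS : s ⊆ S) (htS : t ⊆ S) (hfs : IntegrableOn f s μ) (hft : IntegrableOn f t μ) :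
    ∫ x in S, f x * (s.indicator 1 x - t.indicator 1 x) ∂μ
      = ∫ x in s, f x ∂μ - ∫ x in t, f x ∂μ := by
  have hind : ∀ u : Set α, ∀ x, f x * u.indicator 1 x = u.indicator f x := fun u x => by
    simpa using (indicator_mul_right u f 1).symm
  simp only [mul_sub, hind]
  rw [integral_sub (hfs.integrable_indicator hs).integrableOn
      (hft.integrable_indicator ht).integrableOn,
    setIntegral_indicator hs, setIntegral_indicator ht,
    inter_eq_self_of_subset_right hsS, inter_eq_self_of_subset_right htS]

theorem setIntegral_Ioc_sub_const (a c b : ℝ) (h : a ≤ c) :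
    ∫ x in Ioc a c, (x - b) = ((c - b) ^ 2 - (a - b) ^ 2) / 2 := by
  rw [← intervalIntegral.integral_of_le h]
  simp [intervalIntegral.integral_comp_sub_right (fun x => x)]

theorem volume_real_Ico_inter_Iic (a c b : ℝ) :
    volume.real (Ico a c ∩ Iic b) = max (min c b - a) 0 := by
  rw [← measureReal_congr ((ae_eq_refl (Ico a c)).inter Iio_ae_eq_Iic), Ico_inter_Iio,
    Real.volume_real_Ico]

theorem setIntegral_Ico_indicator_Iic (a c b : ℝ) :
    ∫ y in Ico a c, (Iic b).indicator 1 y = max (min c b - a) 0 := by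
  rw [setIntegral_indicator measurableSet_Iic]
  simp [volume_real_Ico_inter_Iic]

theorem max_min_sub_max_min_eq_tent {w ε : ℝ} (b : ℝ) (hε : 0 < ε) :
    max (min w b - (w - ε)) 0 - max (min (w + ε) b - w) 0
      = ε * max (1 - |b - w| / ε) 0 := by
  rw [mul_max_of_nonneg _ _ hε.le, mul_sub, mul_div_cancel₀ _ hε.ne', mul_one, mul_zero]
  rcases abs_cases (b - w) with ⟨h, _⟩ | ⟨h, _⟩ <;> rw [h] <;>
    simp only [max_def, min_def] <;> split_ifs <;> linarith

noncomputable def valueProfile (v : ℝ) : ℝ :=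
  (Icc (15/16 : ℝ) 1).indicator 1 v - (Ico (7/8 : ℝ) (15/16)).indicator 1 v

noncomputable def bidProfile (w ε m : ℝ) : ℝ :=
  (Ico (w - ε) w).indicator 1 m - (Ico w (w + ε)).indicator 1 m

theorem Icc_fifteen_sixteenths_subset : Icc (15/16 : ℝ) 1 ⊆ Icc 0 1 :=
  Icc_subset_Icc (by norm_num) le_rfl

theorem Ico_seven_eighths_subset : Ico (7/8 : ℝ) (15/16) ⊆ Icc 0 1 :=
  Ico_subset_Icc_self.trans (Icc_subset_Icc (by norm_num) (by norm_num))

theorem integral_valueProfile : ∫ v in Icc (0 : ℝ) 1, valueProfile v = 0 := by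
  have h := setIntegral_mul_indicator_sub_indicator (μ := volume) (f := fun _ => (1 : ℝ))
    measurableSet_Icc measurableSet_Ico Icc_fifteen_sixteenths_subset Ico_seven_eighths_subset
    (integrableOn_const measure_Icc_lt_top.ne) (integrableOn_const measure_Ico_lt_top.ne)
  simp only [one_mul] at h
  simp only [valueProfile, h]
  norm_num

theorem integral_sub_mul_valueProfile (b : ℝ) :
    ∫ v in Icc (0 : ℝ) 1, (v - b) * valueProfile v = 1 / 256 := by
  have hcont : Continuous fun v : ℝ => v - b := by fun_prop
  simp only [valueProfile]
  rw [setIntegral_mul_indicator_sub_indicator measurableSet_Icc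
      measurableSet_Ico Icc_fifteen_sixteenths_subset Ico_seven_eighths_subset
      hcont.integrableOn_Icc (hcont.integrableOn_Icc.mono_set Ico_subset_Icc_self),
    integral_Icc_eq_integral_Ioc, integral_Ico_eq_integral_Ioc,
    setIntegral_Ioc_sub_const _ _ _ (by norm_num), setIntegral_Ioc_sub_const _ _ _ (by norm_num)]
  ring

theorem integral_indicator_Iic_mul_bidProfile {w ε : ℝ} (b : ℝ) (hε : 0 < ε)
    (hl : 0 ≤ w - ε) (hr : w + ε ≤ 1) :
    ∫ m in Icc (0 : ℝ) 1, (Iic b).indicator 1 m * bidProfile w ε m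
      = ε * max (1 - |b - w| / ε) 0 := by
  have hint : ∀ a c : ℝ, IntegrableOn ((Iic b).indicator (1 : ℝ → ℝ)) (Ico a c) := fun _ _ =>
    (integrableOn_const measure_Ico_lt_top.ne).indicator measurableSet_Iic
  simp only [bidProfile]
  rw [setIntegral_mul_indicator_sub_indicator measurableSet_Ico
      measurableSet_Ico (Ico_subset_Icc_self.trans (Icc_subset_Icc hl (by linarith)))
      (Ico_subset_Icc_self.trans (Icc_subset_Icc (by linarith) hr)) (hint _ _) (hint _ _),
    setIntegral_Ico_indicator_Iic, setIntegral_Ico_indicator_Iic,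
    max_min_sub_max_min_eq_tent b hε]

/-- Tent-map perturbation identity: the perturbation g_{w,ε} has zero total mass
and shifts the expected utility of bid b by exactly (ε/144)·Λ_{w,ε}(b). -/
theorem stmt_19 (w ε : ℝ) (hε : 0 < ε) (hl : 1/4 ≤ w - ε) (hr : w + ε ≤ 3/4)
    (g : ℝ × ℝ → ℝ)
    (hg : ∀ p : ℝ × ℝ, g p =
      (16/9) * ((if (p.1 ∈ Set.Icc (15/16:ℝ) 1 ∧ p.2 ∈ Set.Ico (w - ε) w)
                    ∨ (p.1 ∈ Set.Ico (7/8:ℝ) (15/16) ∧ p.2 ∈ Set.Ico w (w + ε))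
                 then 1 else 0)
              - (if (p.1 ∈ Set.Icc (15/16:ℝ) 1 ∧ p.2 ∈ Set.Ico w (w + ε))
                    ∨ (p.1 ∈ Set.Ico (7/8:ℝ) (15/16) ∧ p.2 ∈ Set.Ico (w - ε) w)
                 then 1 else 0))) :
    (∫ p in Set.Icc (0:ℝ) 1 ×ˢ Set.Icc (0:ℝ) 1, g p) = 0 ∧
    ∀ b ∈ Set.Icc (0:ℝ) 1,
      (∫ p in Set.Icc (0:ℝ) 1 ×ˢ Set.Icc (0:ℝ) 1,
          (p.1 - b) * (if p.2 ≤ b then 1 else 0) * g p)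
        = (ε / 144) * max (1 - |b - w| / ε) 0 := by
  have hg_prod : ∀ p : ℝ × ℝ, g p = 16/9 * valueProfile p.1 * bidProfile w ε p.2 := fun p => by
    rw [hg, ite_or_sub_ite_or_eq_mul]
    simp only [valueProfile, bidProfile, indicator_apply, Pi.one_apply]
    ring
  rw [Measure.volume_eq_prod]
  refine ⟨?_, fun b _ => ?_⟩
  · simp_rw [hg_prod]
    rw [setIntegral_prod_mul (fun v => 16/9 * valueProfile v) (bidProfile w ε),
      integral_const_mul, integral_valueProfile, mul_zero, zero_mul]
  · have hintegrand : ∀ p : ℝ × ℝ, (p.1 - b) * (if p.2 ≤ b then 1 else 0) * g p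
        = 16/9 * ((p.1 - b) * valueProfile p.1) * ((Iic b).indicator 1 p.2 * bidProfile w ε p.2) :=
      fun p => by
        simp only [hg_prod, indicator_apply, mem_Iic, Pi.one_apply]
        ring
    simp_rw [hintegrand]
    rw [setIntegral_prod_mul (fun v => 16/9 * ((v - b) * valueProfile v))
        (fun m => (Iic b).indicator 1 m * bidProfile w ε m), integral_const_mul,
      integral_sub_mul_valueProfile, integral_indicator_Iic_mul_bidProfile b hε (by linarith)
        (by linarith)]
    ring
end
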